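/- Let (α_n)_{n∈ℕ} be a sequence of complex numbers with |α_n| = 1 for all n, and let C_α be the conjugation on ℓ²(ℕ, ℂ) defined coefficientwise by (C_α a)_n = α_n² conj(a_n). Let T be a Toeplitz operator on ℓ²(ℕ, ℂ) with symbol coefficients φ_k (k ∈ ℤ). Then T is C_α-symmetric (C_α T* C_α = T) if and only if φ_{m−n} = α_m² · conj(α_n)² · φ_{n−m} for all m, n ∈ ℕ. -/

import Mathlib

/-! In the basis `e n` the antilinear map `(C a) n = β n * conj (a n)` is diagonal, so the
matrix of `C T* C` has entries `β m * conj (β n) * t_{nm}`, where `t_{mn} = (T (e n)) m`.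
Expanding each coordinate of `C T* C x` and `T x` as a series over the basis shows that
`C T* C = T` exactly when `t_{mn} = β m * conj (β n) * t_{nm}`; with `β n = α n ^ 2` and
`t_{mn} = φ (m - n)` this is the stated relation. -/

noncomputable section
open scoped ComplexConjugate
open ContinuousLinearMap

/-- A conjugation on a complex Hilbert space: an antilinear, involutive, isometric map. -/
def IsConjugation {E : Type*} [NormedAddCommGroup E] [InnerProductSpace ℂ E] (C : E → E) : Prop :=
  (∀ (a : ℂ) (f g : E), C (a • f + g) = conj a • C f + C g) ∧
  (∀ f, C (C f) = f) ∧
  (∀ f, ‖C f‖ = ‖f‖)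

/-- The inner product in the paper's convention: linear in the first argument and
conjugate-linear in the second (Mathlib's `inner` with the arguments swapped). -/
def ip {E : Type*} [NormedAddCommGroup E] [InnerProductSpace ℂ E] (x y : E) : ℂ :=
  inner ℂ y x

/-- `ℓ²(ℕ, ℂ)`, identified with the Hardy space `H²(𝔻)` via Taylor coefficients. -/
abbrev Ell2 : Type := lp (fun _ : ℕ => ℂ) 2

/-- The standard orthonormal basis of `ℓ²(ℕ, ℂ)`. -/
def e (n : ℕ) : Ell2 := lp.single 2 n 1

namespace Ell2

lemma apply_eq_inner_e (y : Ell2) (m : ℕ) : y m = inner ℂ (e m) y := by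
  simp [e, lp.inner_single_left]

lemma adjoint_apply_e_apply (T : Ell2 →L[ℂ] Ell2) (m n : ℕ) :
    adjoint T (e n) m = conj (T (e m) n) := by
  rw [apply_eq_inner_e, adjoint_inner_right, ← inner_conj_symm, ← apply_eq_inner_e]

lemma apply_eq_tsum (T : Ell2 →L[ℂ] Ell2) (x : Ell2) (m : ℕ) :
    T x m = ∑' n, T (e n) m * x n := by
  rw [apply_eq_inner_e, ← adjoint_inner_left, lp.inner_eq_tsum]
  simp [adjoint_apply_e_apply, mul_comm]

variable {β : ℕ → ℂ} {C : Ell2 → Ell2}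

lemma apply_e_of_apply_eq_mul_conj (hC : ∀ (a : Ell2) (n : ℕ), C a n = β n * conj (a n))
    (n : ℕ) : C (e n) = β n • e n := by
  ext k
  rw [hC, lp.coeFn_smul, Pi.smul_apply]
  rcases eq_or_ne k n with rfl | hk
  · simp [e]
  · simp [e, hk]

theorem conj_adjoint_conj_eq_iff (hC : ∀ (a : Ell2) (n : ℕ), C a n = β n * conj (a n))
    (T : Ell2 →L[ℂ] Ell2) :
    (∀ x, C (adjoint T (C x)) = T x) ↔ ∀ m n : ℕ, T (e n) m = β m * conj (β n) * T (e m) n := by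
  constructor
  · intro hT m n
    rw [← hT, hC, apply_e_of_apply_eq_mul_conj hC, map_smul, lp.coeFn_smul, Pi.smul_apply,
      smul_eq_mul, adjoint_apply_e_apply, map_mul, Complex.conj_conj, mul_assoc]
  · intro hT x
    ext m
    rw [hC, apply_eq_tsum, apply_eq_tsum, Complex.conj_tsum, ← tsum_mul_left]
    refine tsum_congr fun n => ?_
    rw [hT, hC, adjoint_apply_e_apply]
    simp only [map_mul, Complex.conj_conj]
    ring

end Ell2

theorem c_alpha_symmetric_iff
    (α : ℕ → ℂ)
    (C : Ell2 → Ell2)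
    (hCdef : ∀ (a : Ell2) (n : ℕ), C a n = (α n) ^ 2 * conj (a n))
    (T : Ell2 →L[ℂ] Ell2)
    (φ : ℤ → ℂ) (hφ : ∀ m n : ℕ, φ ((m : ℤ) - (n : ℤ)) = ip (T (e n)) (e m)) :
    (∀ x, C (adjoint T (C x)) = T x) ↔
      ∀ m n : ℕ, φ ((m : ℤ) - (n : ℤ)) = (α m) ^ 2 * (conj (α n)) ^ 2 * φ ((n : ℤ) - (m : ℤ)) := by
  have entry (m n : ℕ) : T (e n) m = φ ((m : ℤ) - (n : ℤ)) := by
    rw [hφ, ip, Ell2.apply_eq_inner_e]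
  simp only [Ell2.conj_adjoint_conj_eq_iff hCdef, entry, map_pow]
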